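/- Let n > 0, x > 0, δ ∈ ℝ and y = x²/(n+x²). Then Q_n(x;δ) = (1/2) erf(δ/√2) − (δ n e^{-δ²/2}/(2√(2π))) ∫₀^{1-y} t^{n/2-1} ₁F₁(n/2+1; 3/2; δ²(1-t)/2) dt. -/

import Mathlib

open Real MeasureTheory

/-- Complementary error function. -/
noncomputable def erfc (z : ℝ) : ℝ := (2 / Real.sqrt π) * ∫ t in Set.Ioi z, Real.exp (-t^2)

/-- Error function. -/
noncomputable def erf (z : ℝ) : ℝ := 1 - erfc z

/-- Beta function B(a,b) = Γ(a)Γ(b)/Γ(a+b). -/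
noncomputable def betaFn (a b : ℝ) : ℝ := Real.Gamma a * Real.Gamma b / Real.Gamma (a + b)

/-- Regularized incomplete beta function I_y(a,b). -/
noncomputable def regIncBeta (y a b : ℝ) : ℝ :=
  (1 / betaFn a b) * ∫ t in (0:ℝ)..y, t ^ (a - 1) * (1 - t) ^ (b - 1)

/-- The function P_n(x;δ). -/
noncomputable def Pnt (n x δ : ℝ) : ℝ :=
  (1/2) * Real.exp (-δ^2/2) *
    ∑' j : ℕ, ((δ^2/2)^j / (Nat.factorial j : ℝ)) *
      regIncBeta (x^2/(n + x^2)) ((j : ℝ) + 1/2) (n/2)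

/-- The function Q_n(x;δ). -/
noncomputable def Qnt (n x δ : ℝ) : ℝ :=
  (1/2) * Real.exp (-δ^2/2) *
    ∑' j : ℕ, (δ / Real.sqrt 2) * ((δ^2/2)^j / Real.Gamma ((j : ℝ) + 3/2)) *
      regIncBeta (x^2/(n + x^2)) ((j : ℝ) + 1) (n/2)

/-- The noncentral t cumulative distribution function F_n(x;δ). -/
noncomputable def Fnt (n x δ : ℝ) : ℝ :=
  (1/2) * erfc (δ / Real.sqrt 2) + Pnt n x δ + Qnt n x δ

/-- The function R_n(x;δ) = erfc(δ/√2)/2 + Q_n(x;δ) − P_n(x;δ). -/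
noncomputable def Rnt (n x δ : ℝ) : ℝ :=
  (1/2) * erfc (δ / Real.sqrt 2) + Qnt n x δ - Pnt n x δ

/-- Kummer's confluent hypergeometric function ₁F₁(a;b;z). -/
noncomputable def kummerM (a b z : ℝ) : ℝ :=
  ∑' k : ℕ, (Real.Gamma (a + k) / Real.Gamma a) / (Real.Gamma (b + k) / Real.Gamma b) *
    z^k / (Nat.factorial k : ℝ)

/-!
The complement formula `I_y(j+1, n/2) = 1 - I_{1-y}(n/2, j+1)` splits `Q_n` into two series.
With `w = δ/√2`, the first is `Σ w^(2j+1)/Γ(j+3/2) = e^{w²} erf w`: expand `e^{w²(1-s²)}` in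
`w ∫₀¹ e^{w²(1-s²)} ds` and use `∫₀¹ (1-s²)^k ds = √π k!/(2Γ(k+3/2))`. In the second, each
`I_{1-y}(n/2, j+1)` is an integral of `t^{n/2-1}(1-t)^j` over `[0, 1-y]`; all terms being
nonnegative, the sum over `j` can be taken under the integral, where it is the Kummer series in
`δ²(1-t)/2`.
-/

lemma hasSum_intervalIntegral_of_nonneg {a b : ℝ} (hab : a ≤ b) {f : ℕ → ℝ → ℝ}
    (hf : ∀ j, IntervalIntegrable (f j) volume a b)
    (hf0 : ∀ j, ∀ t ∈ Set.Ioc a b, 0 ≤ f j t)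
    (hsum : Summable fun j => ∫ t in a..b, f j t) :
    HasSum (fun j => ∫ t in a..b, f j t) (∫ t in a..b, ∑' j, f j t) := by
  simp only [intervalIntegral.integral_of_le hab] at hsum ⊢
  refine hasSum_integral_of_summable_integral_norm (fun j => (hf j).1) (hsum.congr fun j => ?_)
  exact setIntegral_congr_fun measurableSet_Ioc fun t ht => (Real.norm_of_nonneg (hf0 j t ht)).symm

section Beta

variable {a b y : ℝ}

lemma betaFn_pos (ha : 0 < a) (hb : 0 < b) : 0 < betaFn a b :=
  div_pos (mul_pos (Gamma_pos_of_pos ha) (Gamma_pos_of_pos hb)) (Gamma_pos_of_pos (add_pos ha hb))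

lemma betaFn_comm (a b : ℝ) : betaFn a b = betaFn b a := by
  rw [betaFn, betaFn, mul_comm, add_comm]

lemma intervalIntegrable_betaKernel (ha : 0 < a) (hb : 0 < b) :
    IntervalIntegrable (fun t : ℝ => t ^ (a - 1) * (1 - t) ^ (b - 1)) volume 0 1 := by
  have hleft :
      IntervalIntegrable (fun t : ℝ => t ^ (a - 1) * (1 - t) ^ (b - 1)) volume 0 (1 / 2) :=
    (intervalIntegral.intervalIntegrable_rpow' (by linarith)).mul_continuousOn <|
      (continuousOn_const.sub continuousOn_id).rpow_const fun t ht => by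
        rw [Set.uIcc_of_le (by norm_num)] at ht
        exact Or.inl (show (1 : ℝ) - t ≠ 0 by linarith [ht.2])
  have hright :
      IntervalIntegrable (fun t : ℝ => t ^ (a - 1) * (1 - t) ^ (b - 1)) volume (1 / 2) 1 := by
    have hpow : IntervalIntegrable (fun t : ℝ => (1 - t) ^ (b - 1)) volume (1 / 2) 1 := by
      have h := ((intervalIntegral.intervalIntegrable_rpow' (a := 0) (b := 1 / 2)
        (by linarith : (-1 : ℝ) < b - 1)).comp_sub_left 1).symm
      norm_num at h
      exact h
    refine hpow.continuousOn_mul (continuousOn_id.rpow_const fun t ht => ?_)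
    rw [Set.uIcc_of_le (by norm_num)] at ht
    exact Or.inl (by simp only [id]; linarith [ht.1])
  exact hleft.trans hright

lemma integral_betaKernel (ha : 0 < a) (hb : 0 < b) :
    ∫ t in (0 : ℝ)..1, t ^ (a - 1) * (1 - t) ^ (b - 1) = betaFn a b := by
  have hβ : Complex.betaIntegral a b =
      ((∫ t in (0 : ℝ)..1, t ^ (a - 1) * (1 - t) ^ (b - 1) : ℝ) : ℂ) := by
    rw [Complex.betaIntegral, ← intervalIntegral.integral_ofReal]
    refine intervalIntegral.integral_congr fun t ht => ?_
    rw [Set.uIcc_of_le zero_le_one] at ht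
    simp only [Complex.ofReal_mul, Complex.ofReal_cpow ht.1,
      Complex.ofReal_cpow (sub_nonneg.2 ht.2)]
    push_cast
    ring
  have h := Complex.Gamma_mul_Gamma_eq_betaIntegral (s := a) (t := b) (by simpa) (by simpa)
  rw [hβ, ← Complex.ofReal_add, Complex.Gamma_ofReal, Complex.Gamma_ofReal, Complex.Gamma_ofReal]
    at h
  norm_cast at h
  rw [betaFn, h, mul_div_cancel_left₀ _ (Gamma_pos_of_pos (add_pos ha hb)).ne']

lemma regIncBeta_nonneg (ha : 0 < a) (hb : 0 < b) (hy0 : 0 ≤ y) (hy1 : y ≤ 1) :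
    0 ≤ regIncBeta y a b := by
  refine mul_nonneg (one_div_nonneg.2 (betaFn_pos ha hb).le)
    (intervalIntegral.integral_nonneg hy0 fun t ht => ?_)
  have h1t : 0 ≤ 1 - t := by linarith [ht.2]
  exact mul_nonneg (rpow_nonneg ht.1 _) (rpow_nonneg h1t _)

lemma regIncBeta_eq_one_sub (ha : 0 < a) (hb : 0 < b) (hy0 : 0 ≤ y) (hy1 : y ≤ 1) :
    regIncBeta y a b = 1 - regIncBeta (1 - y) b a := by
  set f : ℝ → ℝ := fun t => t ^ (a - 1) * (1 - t) ^ (b - 1)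
  have hint := intervalIntegrable_betaKernel ha hb
  have hreflect :
      ∫ t in (0 : ℝ)..(1 - y), t ^ (b - 1) * (1 - t) ^ (a - 1) = ∫ t in y..1, f t := by
    simpa [f, mul_comm] using intervalIntegral.integral_comp_sub_left (a := 0) (b := 1 - y) f 1
  have hsplit : (∫ t in (0 : ℝ)..y, f t) + ∫ t in y..1, f t = betaFn a b := by
    rw [intervalIntegral.integral_add_adjacent_intervals
      (hint.mono_set (Set.uIcc_subset_uIcc_left (by simp [hy0, hy1])))
      (hint.mono_set (Set.uIcc_subset_uIcc_right (by simp [hy0, hy1])))]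
    exact integral_betaKernel ha hb
  have hB := (betaFn_pos ha hb).ne'
  rw [regIncBeta, regIncBeta, betaFn_comm b a, hreflect]
  field_simp
  linarith

lemma regIncBeta_le_one (ha : 0 < a) (hb : 0 < b) (hy0 : 0 ≤ y) (hy1 : y ≤ 1) :
    regIncBeta y a b ≤ 1 := by
  rw [regIncBeta_eq_one_sub ha hb hy0 hy1]
  linarith [regIncBeta_nonneg hb ha (sub_nonneg.2 hy1) (sub_le_self 1 hy0)]

lemma regIncBeta_nat_add_one (y a : ℝ) (j : ℕ) :
    regIncBeta y a (j + 1) =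
      Gamma (a + (j + 1)) / (Gamma a * j.factorial) *
        ∫ t in (0 : ℝ)..y, t ^ (a - 1) * (1 - t) ^ j := by
  simp only [regIncBeta, betaFn, one_div_div, add_sub_cancel_right, rpow_natCast,
    Gamma_nat_eq_factorial]

end Beta

section Erf

lemma erf_eq_integral (w : ℝ) : erf w = 2 / √π * ∫ t in (0 : ℝ)..w, exp (-t ^ 2) := by
  have hint : Integrable fun t : ℝ => exp (-t ^ 2) := by
    simpa using integrable_exp_neg_mul_sq one_pos
  have hhalf : ∫ t in Set.Ioi (0 : ℝ), exp (-t ^ 2) = √π / 2 := by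
    simpa using integral_gaussian_Ioi 1
  rw [erf, erfc, ← intervalIntegral.integral_Ioi_sub_Ioi' hint.integrableOn hint.integrableOn,
    hhalf]
  field_simp

lemma Gamma_three_halves : Gamma (3 / 2) = √π / 2 := by
  rw [show (3 / 2 : ℝ) = 1 / 2 + 1 by norm_num, Gamma_add_one (by norm_num), Gamma_one_half_eq]
  ring

lemma Gamma_nat_add_three_halves_succ (k : ℕ) :
    Gamma ((k + 1 : ℕ) + 3 / 2) = (k + 3 / 2) * Gamma (k + 3 / 2) := by
  rw [Nat.cast_succ, add_right_comm, Gamma_add_one (by positivity)]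

lemma integral_one_sub_sq_pow (k : ℕ) :
    ∫ s in (0 : ℝ)..1, (1 - s ^ 2) ^ k = √π / 2 * k.factorial / Gamma (k + 3 / 2) := by
  have hπ : √π ≠ 0 := (sqrt_pos.2 pi_pos).ne'
  induction k with
  | zero => simp [Gamma_three_halves, hπ]
  | succ k ih =>
    -- integration by parts: `s (1 - s²)^(k+1)` vanishes at `0` and at `1`
    have hderiv : ∀ s ∈ Set.uIcc (0 : ℝ) 1,
        HasDerivAt (fun s : ℝ => s * (1 - s ^ 2) ^ (k + 1))
          ((2 * k + 3) * (1 - s ^ 2) ^ (k + 1) - (2 * k + 2) * (1 - s ^ 2) ^ k) s := by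
      intro s _
      refine ((hasDerivAt_id' s).mul
        (((hasDerivAt_pow 2 s).const_sub 1).pow (k + 1))).congr_deriv ?_
      simp only [Nat.add_sub_cancel, Pi.pow_apply, pow_succ _ k]
      push_cast
      ring
    have hrec := intervalIntegral.integral_eq_sub_of_hasDerivAt hderiv
      (Continuous.intervalIntegrable (by fun_prop) _ _)
    rw [intervalIntegral.integral_sub (Continuous.intervalIntegrable (by fun_prop) _ _)
      (Continuous.intervalIntegrable (by fun_prop) _ _), intervalIntegral.integral_const_mul,
      intervalIntegral.integral_const_mul, ih] at hrec
    norm_num at hrec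
    have hΓ : 0 < Gamma (k + 3 / 2) := Gamma_pos_of_pos (by positivity)
    rw [Gamma_nat_add_three_halves_succ, Nat.factorial_succ, Nat.cast_mul]
    field_simp at hrec ⊢
    push_cast
    linear_combination hrec

lemma sqrt_pi_div_two_mul_factorial_le_Gamma (k : ℕ) :
    √π / 2 * k.factorial ≤ Gamma (k + 3 / 2) := by
  induction k with
  | zero => simp [Gamma_three_halves]
  | succ k ih =>
    rw [Gamma_nat_add_three_halves_succ, Nat.factorial_succ, Nat.cast_mul, Nat.cast_succ]
    nlinarith [sqrt_nonneg π, (Nat.cast_nonneg k : (0 : ℝ) ≤ k), Nat.factorial_pos k]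

lemma summable_pow_div_Gamma_nat_add_three_halves {x : ℝ} (hx : 0 ≤ x) :
    Summable fun k : ℕ => x ^ k / Gamma (k + 3 / 2) := by
  refine ((summable_pow_div_factorial x).mul_left (2 / √π)).of_nonneg_of_le
    (fun k => div_nonneg (pow_nonneg hx k) (Gamma_pos_of_pos (by positivity)).le) fun k => ?_
  have hπ : 0 < √π := sqrt_pos.2 pi_pos
  calc x ^ k / Gamma (k + 3 / 2) ≤ x ^ k / (√π / 2 * k.factorial) :=
        div_le_div_of_nonneg_left (pow_nonneg hx k) (by positivity)
          (sqrt_pi_div_two_mul_factorial_le_Gamma k)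
    _ = 2 / √π * (x ^ k / k.factorial) := by field_simp

lemma hasSum_exp_sq_mul_erf (w : ℝ) :
    HasSum (fun k : ℕ => w * (w ^ 2) ^ k / Gamma (k + 3 / 2)) (exp (w ^ 2) * erf w) := by
  have hπ : 0 < √π := sqrt_pos.2 pi_pos
  set F : ℕ → ℝ → ℝ := fun k s => (w ^ 2) ^ k / k.factorial * (1 - s ^ 2) ^ k
  have hF : ∀ k, ∫ s in (0 : ℝ)..1, F k s =
      √π / 2 * ((w ^ 2) ^ k / Gamma (k + 3 / 2)) := by
    intro k
    rw [intervalIntegral.integral_const_mul, integral_one_sub_sq_pow]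
    field_simp
  have hexp : ∀ s, ∑' k, F k s = exp (w ^ 2 * (1 - s ^ 2)) := by
    intro s
    rw [exp_eq_exp_ℝ, ← (NormedSpace.expSeries_div_hasSum_exp _).tsum_eq]
    simp only [F, mul_pow, div_mul_eq_mul_div]
  have hsum : HasSum (fun k => ∫ s in (0 : ℝ)..1, F k s)
      (∫ s in (0 : ℝ)..1, exp (w ^ 2 * (1 - s ^ 2))) := by
    simp only [← hexp]
    refine hasSum_intervalIntegral_of_nonneg zero_le_one
      (fun k => Continuous.intervalIntegrable (by fun_prop) _ _) (fun k s hs => ?_) ?_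
    · have : 0 ≤ 1 - s ^ 2 := by nlinarith [hs.1, hs.2]
      positivity
    · simpa only [hF] using (summable_pow_div_Gamma_nat_add_three_halves (sq_nonneg w)).mul_left _
  have hsub : w * ∫ s in (0 : ℝ)..1, exp (w ^ 2 * (1 - s ^ 2)) =
      exp (w ^ 2) * ∫ t in (0 : ℝ)..w, exp (-t ^ 2) := by
    have h := intervalIntegral.mul_integral_comp_mul_left (a := 0) (b := 1)
      (f := fun t => exp (-t ^ 2)) w
    rw [mul_zero, mul_one] at h
    rw [← h, mul_left_comm, ← intervalIntegral.integral_const_mul (exp (w ^ 2))]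
    congr 1
    refine intervalIntegral.integral_congr fun s _ => ?_
    simp only [← exp_add]
    ring_nf
  have hterms : (fun k : ℕ => w * (w ^ 2) ^ k / Gamma (k + 3 / 2)) =
      fun k => 2 * w / √π * ∫ s in (0 : ℝ)..1, F k s := by
    ext k
    rw [hF]
    field_simp
  have hval : exp (w ^ 2) * erf w =
      2 * w / √π * ∫ s in (0 : ℝ)..1, exp (w ^ 2 * (1 - s ^ 2)) := by
    rw [erf_eq_integral, mul_div_right_comm, mul_assoc, hsub]
    ring
  rw [hterms, hval]
  exact hsum.mul_left _

end Erf

section Kummer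

lemma Gamma_div_Gamma_mul_kummerM {a b : ℝ} (ha : Gamma a ≠ 0) (hb : Gamma b ≠ 0) (z : ℝ) :
    Gamma a / Gamma b * kummerM a b z =
      ∑' k : ℕ, Gamma (a + k) / (Gamma (b + k) * k.factorial) * z ^ k := by
  rw [kummerM, ← tsum_mul_left]
  refine tsum_congr fun k => ?_
  rcases eq_or_ne (Gamma (b + k)) 0 with hbk | hbk
  · simp [hbk]
  · field_simp

lemma hasSum_pow_div_Gamma_mul_regIncBeta {a z x : ℝ} (ha : 0 < a) (hz0 : 0 ≤ z) (hz1 : z ≤ 1)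
    (hx : 0 ≤ x) :
    HasSum (fun j : ℕ => x ^ j / Gamma (j + 3 / 2) * regIncBeta z a (j + 1))
      (2 * a / √π *
        ∫ t in (0 : ℝ)..z, t ^ (a - 1) * kummerM (a + 1) (3 / 2) (x * (1 - t))) := by
  have hΓa := (Gamma_pos_of_pos ha).ne'
  set c : ℕ → ℝ := fun j =>
    x ^ j / Gamma (j + 3 / 2) * (Gamma (a + (j + 1)) / (Gamma a * j.factorial))
  set f : ℕ → ℝ → ℝ := fun j t => c j * (t ^ (a - 1) * (1 - t) ^ j)
  have hf : ∀ j, ∫ t in (0 : ℝ)..z, f j t =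
      x ^ j / Gamma (j + 3 / 2) * regIncBeta z a (j + 1) := by
    intro j
    rw [intervalIntegral.integral_const_mul, regIncBeta_nat_add_one, ← mul_assoc]
  have hkummer : ∀ t, ∑' j, f j t =
      2 * a / √π * (t ^ (a - 1) * kummerM (a + 1) (3 / 2) (x * (1 - t))) := by
    intro t
    calc ∑' j, f j t = t ^ (a - 1) / Gamma a *
          ∑' j : ℕ, Gamma (a + 1 + j) / (Gamma (3 / 2 + j) * j.factorial) *
            (x * (1 - t)) ^ j := by
          rw [← tsum_mul_left]
          refine tsum_congr fun j => ?_
          simp only [f, c, add_comm (3 / 2 : ℝ), add_right_comm a 1, add_assoc, mul_pow]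
          field_simp
      _ = t ^ (a - 1) / Gamma a *
          (Gamma (a + 1) / Gamma (3 / 2) * kummerM (a + 1) (3 / 2) (x * (1 - t))) := by
          rw [Gamma_div_Gamma_mul_kummerM (Gamma_pos_of_pos (by linarith)).ne'
            (Gamma_pos_of_pos (by norm_num)).ne']
      _ = 2 * a / √π * (t ^ (a - 1) * kummerM (a + 1) (3 / 2) (x * (1 - t))) := by
          rw [Gamma_add_one ha.ne', Gamma_three_halves]
          field_simp
  have hf0 : ∀ j, ∀ t ∈ Set.Ioc 0 z, 0 ≤ f j t := by
    intro j t ht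
    have h1t : 0 ≤ 1 - t := by linarith [ht.2]
    have hc : 0 ≤ c j := by
      have := Gamma_pos_of_pos (show 0 < (j : ℝ) + 3 / 2 by positivity)
      have := Gamma_pos_of_pos (show 0 < a + (j + 1) by positivity)
      positivity
    exact mul_nonneg hc (mul_nonneg (rpow_nonneg ht.1.le _) (pow_nonneg h1t j))
  have hfint : ∀ j, IntervalIntegrable (f j) volume 0 z := fun j =>
    ((intervalIntegral.intervalIntegrable_rpow' (by linarith)).mul_continuousOn
      (Continuous.continuousOn (by fun_prop))).const_mul (c j)
  have hsummable : Summable fun j => ∫ t in (0 : ℝ)..z, f j t := by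
    simp only [hf]
    refine (summable_pow_div_Gamma_nat_add_three_halves hx).of_nonneg_of_le (fun j => ?_)
      (fun j => ?_)
    · have := Gamma_pos_of_pos (show 0 < (j : ℝ) + 3 / 2 by positivity)
      exact mul_nonneg (by positivity) (regIncBeta_nonneg ha (by positivity) hz0 hz1)
    · exact mul_le_of_le_one_right
        (div_nonneg (pow_nonneg hx j) (Gamma_pos_of_pos (by positivity)).le)
        (regIncBeta_le_one ha (by positivity) hz0 hz1)
  have h := hasSum_intervalIntegral_of_nonneg hz0 hfint hf0 hsummable
  simp only [hf, hkummer, intervalIntegral.integral_const_mul] at h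
  exact h

end Kummer

theorem Qnt_integral_rep_complementary_general (n x δ : ℝ) (hn : 0 < n)
    (y : ℝ) (hy : y = x^2 / (n + x^2)) :
    Qnt n x δ =
      (1/2) * erf (δ / Real.sqrt 2) -
        (δ * n * Real.exp (-δ^2/2) / (2 * Real.sqrt (2 * π))) *
          ∫ t in (0:ℝ)..(1 - y),
            t ^ (n/2 - 1) * kummerM (n/2 + 1) (3/2) (δ^2 * (1 - t) / 2) := by
  have hy0 : 0 ≤ y := hy ▸ by positivity
  have hy1 : y ≤ 1 := hy ▸ (div_le_one (by positivity)).2 (by linarith)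
  set w := δ / √2
  have hw : w ^ 2 = δ ^ 2 / 2 := by rw [div_pow, sq_sqrt zero_le_two]
  have herf := hasSum_exp_sq_mul_erf w
  have hkummer := hasSum_pow_div_Gamma_mul_regIncBeta (half_pos hn) (sub_nonneg.2 hy1)
    (sub_le_self 1 hy0) (by positivity : 0 ≤ δ ^ 2 / 2)
  rw [hw] at herf
  have hterm : ∀ j : ℕ,
      w * ((δ ^ 2 / 2) ^ j / Gamma (j + 3 / 2)) * regIncBeta y (j + 1) (n / 2) =
        w * (δ ^ 2 / 2) ^ j / Gamma (j + 3 / 2) -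
          w * ((δ ^ 2 / 2) ^ j / Gamma (j + 3 / 2) * regIncBeta (1 - y) (n / 2) (j + 1)) := by
    intro j
    rw [regIncBeta_eq_one_sub (by positivity) (half_pos hn) hy0 hy1]
    ring
  rw [Qnt, ← hy, tsum_congr hterm, (herf.sub (hkummer.mul_left w)).tsum_eq]
  simp_rw [mul_div_right_comm (δ ^ 2)]
  have hexp : exp (-δ ^ 2 / 2) * exp (δ ^ 2 / 2) = 1 := by
    rw [← exp_add, neg_div, neg_add_cancel, exp_zero]
  rw [sqrt_mul zero_le_two]
  linear_combination (erf w / 2) * hexp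

theorem Qnt_integral_rep_complementary (n x δ : ℝ) (hn : 0 < n) (hx : 0 < x)
    (y : ℝ) (hy : y = x^2 / (n + x^2)) :
    Qnt n x δ =
      (1/2) * erf (δ / Real.sqrt 2) -
        (δ * n * Real.exp (-δ^2/2) / (2 * Real.sqrt (2 * π))) *
          ∫ t in (0:ℝ)..(1 - y),
            t ^ (n/2 - 1) * kummerM (n/2 + 1) (3/2) (δ^2 * (1 - t) / 2) :=
  Qnt_integral_rep_complementary_general n x δ hn y hy
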